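/- Let R be a domain, f ∈ R nonzero, and S = R[u,v]/(uv - f). Then S decomposes as a Z-graded ring with S_0 = R, S_i = R·u^i for i > 0, and S_{-i} = R·v^i for i > 0; in particular the natural map R → S is injective and each graded component is a free R-module of rank 1. -/

import Mathlib

open MvPolynomial

/-- The suspension ring `S = R[u,v]/(uv - f)`. -/
abbrev Susp (R : Type*) [CommRing R] (f : R) : Type _ :=
  MvPolynomial (Fin 2) R ⧸
    Ideal.span {(X 0 * X 1 - C f : MvPolynomial (Fin 2) R)}

/-- The image of the variable `u` in `S`. -/
noncomputable abbrev suspU (R : Type*) [CommRing R] (f : R) : Susp R f :=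
  Ideal.Quotient.mk _ (X 0)

/-- The image of the variable `v` in `S`. -/
noncomputable abbrev suspV (R : Type*) [CommRing R] (f : R) : Susp R f :=
  Ideal.Quotient.mk _ (X 1)

/-- The degree-`i` component of `S = R[u,v]/(uv - f)`: `R·u^i` for `i ≥ 0` and
`R·v^{-i}` for `i < 0`. -/
noncomputable def suspComponent (R : Type*) [CommRing R] (f : R) (i : ℤ) :
    Submodule R (Susp R f) :=
  if 0 ≤ i then Submodule.span R {(suspU R f) ^ i.toNat}
  else Submodule.span R {(suspV R f) ^ (-i).toNat}

/-! The monomials `u^a v^b` span `S`, and `u^a v^b = f^(min a b) • u^(a-b)` or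
`f^(min a b) • v^(b-a)`, so the components span `S` and multiply as a grading should. For
independence and freeness, send `S` to `R[T;T⁻¹]` by `u ↦ T`, `v ↦ f T⁻¹`: the generator of
degree `i` goes to `f^(max (-i) 0) T^i`, and these are linearly independent because `f` is a
non-zero-divisor. -/

open scoped nonZeroDivisors LaurentPolynomial

theorem LaurentPolynomial.linearIndependent_C_mul_T {R : Type*} [CommRing R] {c : ℤ → R}
    (hc : ∀ i, c i ∈ R⁰) : LinearIndependent R fun i => (C (c i) * T i : R[T;T⁻¹]) := by
  simp_rw [← single_eq_C_mul_T]
  refine Ideal.iSupIndep.linearIndependent' ?_ fun i => eq_bot_iff.mpr fun r hr => ?_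
  · exact AddMonoidAlgebra.grade.isInternal.submodule_iSupIndep.mono fun i =>
      (Submodule.span_singleton_le_iff_mem _ _).mpr (AddMonoidAlgebra.single_mem_grade i (c i))
  · rwa [Ideal.mem_torsionOf_iff, AddMonoidAlgebra.smul_single', AddMonoidAlgebra.single_eq_zero,
      mul_right_mem_nonZeroDivisors_eq_zero_iff (hc i)] at hr

section

variable {R : Type*} [CommRing R] (f : R)

-- Truncated subtraction in `Int.toNat` makes this `u^i` for `i ≥ 0` and `v^(-i)` for `i < 0`.
noncomputable def suspGen (i : ℤ) : Susp R f :=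
  suspU R f ^ i.toNat * suspV R f ^ (-i).toNat

lemma suspGen_zero : suspGen f 0 = 1 := by
  simp [suspGen]

lemma suspComponent_eq_span (i : ℤ) : suspComponent R f i = R ∙ suspGen f i := by
  rw [suspComponent, suspGen]
  split_ifs with hi
  · rw [show (-i).toNat = 0 by omega, pow_zero, mul_one]
  · rw [show i.toNat = 0 by omega, pow_zero, one_mul]

lemma suspU_mul_suspV : suspU R f * suspV R f = algebraMap R (Susp R f) f :=
  (map_mul _ _ _).symm.trans (Ideal.Quotient.eq.mpr (Ideal.subset_span rfl))

lemma suspU_pow_mul_suspV_pow (m p q : ℕ) :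
    suspU R f ^ (m + p) * suspV R f ^ (m + q) = f ^ m • (suspU R f ^ p * suspV R f ^ q) := by
  refine Eq.trans ?_ (Algebra.smul_def (f ^ m) (suspU R f ^ p * suspV R f ^ q)).symm
  rw [map_pow, ← suspU_mul_suspV]
  ring

lemma suspU_pow_mul_suspV_pow_mem (a b : ℕ) :
    suspU R f ^ a * suspV R f ^ b ∈ suspComponent R f (a - b) := by
  have h := suspU_pow_mul_suspV_pow f (min a b) ((a - b : ℤ).toNat) ((-(a - b : ℤ)).toNat)
  rw [show min a b + ((a - b : ℤ)).toNat = a by omega,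
    show min a b + (-(a - b : ℤ)).toNat = b by omega] at h
  rw [h, suspComponent_eq_span]
  exact Submodule.smul_mem _ _ (Submodule.mem_span_singleton_self _)

lemma suspGen_mul_suspGen_mem (i j : ℤ) :
    suspGen f i * suspGen f j ∈ suspComponent R f (i + j) := by
  have h := suspU_pow_mul_suspV_pow_mem f (i.toNat + j.toNat) ((-i).toNat + (-j).toNat)
  rw [show ((i.toNat + j.toNat : ℕ) : ℤ) - ((-i).toNat + (-j).toNat : ℕ) = i + j by omega] at h
  rw [suspGen, suspGen]
  convert h using 1
  ring

theorem suspComponent_gradedMonoid : SetLike.GradedMonoid (suspComponent R f) where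
  one_mem := by
    rw [suspComponent_eq_span, ← suspGen_zero f]
    exact Submodule.mem_span_singleton_self _
  mul_mem i j x y hx hy := by
    rw [suspComponent_eq_span, Submodule.mem_span_singleton] at hx hy
    obtain ⟨r, rfl⟩ := hx
    obtain ⟨s, rfl⟩ := hy
    rw [smul_mul_smul]
    exact Submodule.smul_mem _ _ (suspGen_mul_suspGen_mem f i j)

lemma susp_mk_monomial (s : Fin 2 →₀ ℕ) (a : R) :
    Ideal.Quotient.mk (Ideal.span {(X 0 * X 1 - C f : MvPolynomial (Fin 2) R)}) (monomial s a)
      = a • (suspU R f ^ s 0 * suspV R f ^ s 1) := by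
  rw [← Ideal.Quotient.mkₐ_eq_mk R, aeval_unique (Ideal.Quotient.mkₐ R _), aeval_monomial,
    Finsupp.prod_fintype _ _ (by simp), Fin.prod_univ_two]
  exact (Algebra.smul_def _ _).symm

lemma iSup_suspComponent_eq_top : ⨆ i, suspComponent R f i = ⊤ := by
  rw [eq_top_iff]
  rintro x -
  obtain ⟨p, rfl⟩ := Ideal.Quotient.mk_surjective x
  induction p using MvPolynomial.induction_on' with
  | monomial s a =>
    rw [susp_mk_monomial]
    exact Submodule.mem_iSup_of_mem _
      (Submodule.smul_mem _ a (suspU_pow_mul_suspV_pow_mem f (s 0) (s 1)))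
  | add p q hp hq => rw [map_add]; exact add_mem hp hq

noncomputable def suspToLaurent : Susp R f →ₐ[R] R[T;T⁻¹] :=
  Ideal.Quotient.liftₐ _
    (aeval ![LaurentPolynomial.T 1, LaurentPolynomial.C f * LaurentPolynomial.T (-1)])
    fun _ ha => by
      obtain ⟨c, rfl⟩ := Ideal.mem_span_singleton'.mp ha
      simp

lemma suspToLaurent_suspU : suspToLaurent f (suspU R f) = LaurentPolynomial.T 1 :=
  (Ideal.Quotient.lift_mk _ _ _).trans (by simp)

lemma suspToLaurent_suspV :
    suspToLaurent f (suspV R f) = LaurentPolynomial.C f * LaurentPolynomial.T (-1) :=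
  (Ideal.Quotient.lift_mk _ _ _).trans (by simp)

lemma suspToLaurent_suspGen (i : ℤ) :
    suspToLaurent f (suspGen f i) =
      LaurentPolynomial.C (f ^ (-i).toNat) * LaurentPolynomial.T i := by
  rw [suspGen, map_mul, map_pow, map_pow, suspToLaurent_suspU, suspToLaurent_suspV,
    LaurentPolynomial.T_pow, mul_pow, ← map_pow, LaurentPolynomial.T_pow, mul_left_comm,
    ← LaurentPolynomial.T_add]
  congr 2
  omega

lemma linearIndependent_suspGen (hf : f ∈ R⁰) : LinearIndependent R (suspGen f) := by
  refine LinearIndependent.of_comp (suspToLaurent f).toLinearMap ?_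
  have hcomp : (suspToLaurent f).toLinearMap ∘ suspGen f =
      fun i => LaurentPolynomial.C (f ^ (-i).toNat) * LaurentPolynomial.T i :=
    funext (suspToLaurent_suspGen f)
  rw [hcomp]
  exact LaurentPolynomial.linearIndependent_C_mul_T fun i => pow_mem hf _

end

/-- `S = R[u,v]/(uv - f)` is `ℤ`-graded with `S₀ = R`, `S_i = R·u^i` and
`S_{-i} = R·v^i` for `i > 0`: the components form an internal direct sum
compatible with multiplication, the natural map `R → S` is injective, and each
component is a free `R`-module of rank one. -/
theorem suspension_grading (R : Type*) [CommRing R] [IsDomain R] (f : R)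
    (hf0 : f ≠ 0) :
    Function.Injective (algebraMap R (Susp R f)) ∧
    DirectSum.IsInternal (suspComponent R f) ∧
    SetLike.GradedMonoid (suspComponent R f) ∧
    ∀ i : ℤ, Nonempty (suspComponent R f i ≃ₗ[R] R) := by
  have hli := linearIndependent_suspGen f (mem_nonZeroDivisors_of_ne_zero hf0)
  have hspan : suspComponent R f = fun i => R ∙ suspGen f i := funext (suspComponent_eq_span f)
  refine ⟨fun a b hab => hli.smul_left_injective 0 ?_, ?_, suspComponent_gradedMonoid f,
    fun i => ⟨?_⟩⟩
  · simpa only [suspGen_zero, Algebra.algebraMap_eq_smul_one] using hab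
  · rw [DirectSum.isInternal_submodule_iff_iSupIndep_and_iSup_eq_top, hspan]
    exact ⟨hli.iSupIndep_span_singleton, hspan ▸ iSup_suspComponent_eq_top f⟩
  · exact (LinearEquiv.ofInjective _ (hli.smul_left_injective i) ≪≫ₗ
      LinearEquiv.ofEq _ _ (by rw [suspComponent_eq_span, LinearMap.span_singleton_eq_range])).symm
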